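/- If G is any graph and T ⊆ G is any normal tree, then every end of G in the closure of V(T) contains exactly one normal ray of T. Moreover, sending these ends to the normal rays they contain defines a bijection between ∂_Ω T and the set of normal rays of T. -/

import Mathlib

/-! Basic notions for the theory of stars and combs in infinite graphs. -/

universe u

open SimpleGraph

namespace StarsCombs

variable {V : Type u} {ι : Type u}

/-- A ray in the graph `G`: an injective sequence of consecutively adjacent vertices. -/
def IsRay (G : SimpleGraph V) (r : ℕ → V) : Prop :=
  Function.Injective r ∧ ∀ n, G.Adj (r n) (r (n + 1))

/-- The vertex `v` dominates the ray `r` in `G`: there is an infinite `v`–`(R − v)` fan,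
i.e. infinitely many paths from `v` to pairwise distinct vertices of the ray other than `v`,
each meeting the ray only in its last vertex, and pairwise meeting only in `v`. -/
def Dominates (G : SimpleGraph V) (v : V) (r : ℕ → V) : Prop :=
  ∃ (t : ℕ → ℕ) (p : ∀ n, G.Walk v (r (t n))),
    Function.Injective t ∧ (∀ n, r (t n) ≠ v) ∧ (∀ n, (p n).IsPath) ∧
    (∀ n w, w ∈ (p n).support → w ≠ v → w ∈ Set.range r → w = r (t n)) ∧
    (∀ m n, m ≠ n → ∀ w, w ∈ (p m).support → w ∈ (p n).support → w = v)

/-- A ray is undominated if no vertex dominates it. -/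
def Undominated (G : SimpleGraph V) (r : ℕ → V) : Prop := ∀ v, ¬ Dominates G v r

/-- A comb attached to `U`: the union of a ray (the spine) with infinitely many pairwise
disjoint finite paths, possibly trivial, that have precisely their first vertex on the spine;
the last vertices of those paths (the teeth) all lie in `U`. -/
structure Comb (G : SimpleGraph V) (U : Set V) where
  spine : ℕ → V
  spine_ray : IsRay G spine
  start : ℕ → ℕ
  tooth : ℕ → V
  tooth_mem : ∀ n, tooth n ∈ U
  path : ∀ n, G.Walk (spine (start n)) (tooth n)
  path_isPath : ∀ n, (path n).IsPath
  meets_spine : ∀ n w, w ∈ (path n).support → w ∈ Set.range spine → w = spine (start n)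
  paths_disjoint : ∀ m n, m ≠ n → ∀ w, w ∈ (path m).support → w ∉ (path n).support

/-- A subdivided infinite star attached to `U`: a centre together with infinitely many
nontrivial paths from the centre to pairwise distinct leaves in `U`, any two of which meet
exactly in the centre. -/
structure Star (G : SimpleGraph V) (U : Set V) where
  center : V
  leaf : ℕ → V
  leaf_mem : ∀ n, leaf n ∈ U
  leaf_ne : ∀ n, leaf n ≠ center
  path : ∀ n, G.Walk center (leaf n)
  path_isPath : ∀ n, (path n).IsPath
  paths_disjoint : ∀ m n, m ≠ n → ∀ w, w ∈ (path m).support → w ∈ (path n).support → w = center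

/-- `G` contains a comb attached to `U`. -/
def HasComb (G : SimpleGraph V) (U : Set V) : Prop := Nonempty (Comb G U)

/-- `G` contains a star attached to `U`. -/
def HasStar (G : SimpleGraph V) (U : Set V) : Prop := Nonempty (Star G U)

/-- `G` contains a dominated comb attached to `U`: a comb attached to `U` whose spine is
dominated by some vertex. -/
def HasDominatedComb (G : SimpleGraph V) (U : Set V) : Prop :=
  ∃ c : Comb G U, ∃ v, Dominates G v c.spine

/-- Two rays are equivalent (belong to the same end of `G`): for every finite vertex set `X`,
tails of the two rays lie in the same component of `G − X`. -/
def EquivRays (G : SimpleGraph V) (r s : ℕ → V) : Prop :=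
  ∀ X : Set V, X.Finite → ∃ (m n : ℕ) (p : G.Walk (r m) (s n)),
    (∀ w ∈ p.support, w ∉ X) ∧ (∀ k, m ≤ k → r k ∉ X) ∧ (∀ k, n ≤ k → s k ∉ X)

/-- The end of the ray `r` lies in the closure of `U` in `G`: there is a comb attached to `U`
whose spine is equivalent to `r`.  (As a predicate on rays, this describes the set `∂_Ω U` of
ends of `G` lying in the closure of `U`.) -/
def InClosure (G : SimpleGraph V) (U : Set V) (r : ℕ → V) : Prop :=
  ∃ c : Comb G U, EquivRays G c.spine r

/-- A vertex set is dispersed if there is no comb attached to it. -/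
def Dispersed (G : SimpleGraph V) (D : Set V) : Prop := ¬ HasComb G D

/-! ### Rooted trees and normal trees inside a graph -/

/-- A rooted tree `T ⊆ G`: a subgraph of `G` that is a tree, with a root. -/
structure RootedTree (G : SimpleGraph V) where
  sub : G.Subgraph
  root : V
  root_mem : root ∈ sub.verts
  isTree : sub.coe.IsTree

namespace RootedTree

variable {G : SimpleGraph V}

/-- The tree-order of a rooted tree: `x ≤ y` iff `x` lies on the (unique) path in the tree
from the root to `y`. -/
def tle (T : RootedTree G) (x y : V) : Prop :=
  ∃ (hx : x ∈ T.sub.verts) (hy : y ∈ T.sub.verts),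
    ∀ p : T.sub.coe.Walk ⟨T.root, T.root_mem⟩ ⟨y, hy⟩, p.IsPath →
      (⟨x, hx⟩ : T.sub.verts) ∈ p.support

/-- A rooted tree `T ⊆ G` is normal in `G` if the endvertices of every `T`-path in `G`
(a nontrivial path meeting `T` exactly in its endvertices) are comparable in the
tree-order of `T`. -/
def IsNormal (T : RootedTree G) : Prop :=
  ∀ ⦃a b : V⦄ (p : G.Walk a b), p.IsPath → 0 < p.length →
    a ∈ T.sub.verts → b ∈ T.sub.verts →
    (∀ w ∈ p.support, w ≠ a → w ≠ b → w ∉ T.sub.verts) →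
    (T.tle a b ∨ T.tle b a)

/-- A ray of the tree `T`. -/
def IsRayIn (T : RootedTree G) (r : ℕ → V) : Prop :=
  Function.Injective r ∧ ∀ n, T.sub.Adj (r n) (r (n + 1))

/-- A normal ray of `T`: a ray of `T` starting at the root. -/
def IsNormalRay (T : RootedTree G) (r : ℕ → V) : Prop :=
  T.IsRayIn r ∧ r 0 = T.root

/-- `T` contains `U` cofinally: `U ⊆ V(T)` and every node of `T` lies below some element
of `U` in the tree-order. -/
def ContainsCofinally (T : RootedTree G) (U : Set V) : Prop :=
  U ⊆ T.sub.verts ∧ ∀ t ∈ T.sub.verts, ∃ u ∈ U, T.tle t u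

/-- `T` is rayless. -/
def Rayless (T : RootedTree G) : Prop := ¬ ∃ r, T.IsRayIn r

/-- `T` is locally finite. -/
def LocallyFinite (T : RootedTree G) : Prop := ∀ v, {w | T.sub.Adj v w}.Finite

/-- `T` is a spanning tree. -/
def Spanning (T : RootedTree G) : Prop := T.sub.verts = Set.univ

end RootedTree

/-- Every component of `G − S` has finite neighbourhood (in `S`). -/
def CompFiniteNbhd (G : SimpleGraph V) (S : Set V) : Prop :=
  ∀ C : G.ComponentCompl S, {v ∈ S | ∃ w ∈ C.supp, G.Adj v w}.Finite

/-! ### Abstract (decomposition) trees -/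

/-- Tree-order of the tree `T` with root `root`: `x ≤ y` iff `x` lies on every
root–`y` path. -/
def treeLE (T : SimpleGraph ι) (root x y : ι) : Prop :=
  ∀ p : T.Walk root y, p.IsPath → x ∈ p.support

/-- `k` lies on the same side of the edge `ij` as `j` (there is a `j`–`k` walk
avoiding `i`). -/
def SameSide (T : SimpleGraph ι) (i j k : ι) : Prop :=
  ∃ p : T.Walk j k, i ∉ p.support

/-- The oriented edge `(i, j)` of the tree `T` points away from the root. -/
def PointsAway (T : SimpleGraph ι) (root i j : ι) : Prop :=
  T.Adj i j ∧ treeLE T root i j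

/-- A ray of the (abstract) tree `T`. -/
def IsTreeRay (T : SimpleGraph ι) (R : ℕ → ι) : Prop :=
  Function.Injective R ∧ ∀ n, T.Adj (R n) (R (n + 1))

/-- The tree `T` is rayless. -/
def RaylessTree (T : SimpleGraph ι) : Prop := ¬ ∃ R, IsTreeRay T R

/-- The tree `T` is locally finite. -/
def LocallyFiniteTree (T : SimpleGraph ι) : Prop := ∀ t, {s | T.Adj t s}.Finite

/-- `t` is a leaf of the tree `T` (it has at most one neighbour). -/
def IsLeafNode (T : SimpleGraph ι) (t : ι) : Prop := {s | T.Adj t s}.Subsingleton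

/-- The sequence `r` eventually lies in `S`. -/
def EventuallyIn (r : ℕ → V) (S : Set V) : Prop := ∃ N, ∀ n, N ≤ n → r n ∈ S

/-- Two rays share a tail (and hence belong to the same end of a tree). -/
def ShareTail {α : Type*} (R S : ℕ → α) : Prop := ∃ m n, ∀ k, R (m + k) = S (n + k)

/-- The natural order on oriented edges of a tree: `(i,j) ≤ (k,l)` iff they are equal or
there is a `j`–`k` path avoiding both `i` and `l`. -/
def OEdgeLE (T : SimpleGraph ι) (i j k l : ι) : Prop :=
  (i = k ∧ j = l) ∨ ∃ p : T.Walk j k, p.IsPath ∧ i ∉ p.support ∧ l ∉ p.support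

/-! ### Tree-decompositions -/

/-- A tree-decomposition of `G` with decomposition tree on node set `ι`. -/
structure TreeDecomp (G : SimpleGraph V) (ι : Type u) where
  tree : SimpleGraph ι
  isTree : tree.IsTree
  part : ι → Set V
  covers : ∀ v : V, ∃ i, v ∈ part i
  covers_adj : ∀ ⦃u v : V⦄, G.Adj u v → ∃ i, u ∈ part i ∧ v ∈ part i
  parts_connected : ∀ (v : V) (i j : ι), v ∈ part i → v ∈ part j →
    ∀ p : tree.Walk i j, p.IsPath → ∀ k ∈ p.support, v ∈ part k

namespace TreeDecomp

variable {G : SimpleGraph V} (D : TreeDecomp G ι)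

/-- The separator (adhesion set) associated with the edge `ij` of the decomposition tree. -/
def sep (i j : ι) : Set V := D.part i ∩ D.part j

/-- All separators are finite. -/
def FinSeps : Prop := ∀ i j, D.tree.Adj i j → (D.sep i j).Finite

/-- All separators are connected (they induce connected subgraphs of `G`). -/
def ConnSeps : Prop := ∀ i j, D.tree.Adj i j → (G.induce (D.sep i j)).Connected

/-- The separators are pairwise disjoint. -/
def PairwiseDisjointSeps : Prop :=
  ∀ i j k l, D.tree.Adj i j → D.tree.Adj k l → s(i, j) ≠ s(k, l) →
    Disjoint (D.sep i j) (D.sep k l)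

/-- The union of the parts on the `j`-side of the edge `ij`. -/
def sideSet (i j : ι) : Set V := {v | ∃ k, SameSide D.tree i j k ∧ v ∈ D.part k}

/-- The end of `G` represented by the ray `r` lives at node `t`: for every edge of the
decomposition tree, `r` eventually lies on the side of the edge containing `t`. -/
def LivesAt (r : ℕ → V) (t : ι) : Prop :=
  ∀ i j, D.tree.Adj i j → SameSide D.tree i j t → EventuallyIn r (D.sideSet i j)

/-- The end of `G` represented by the ray `r` corresponds to the end of the decomposition
tree represented by the tree-ray `R`. -/
def CorrespondsTo (r : ℕ → V) (R : ℕ → ι) : Prop :=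
  ∀ n, EventuallyIn r (D.sideSet (R n) (R (n + 1)))

/-- The tree-decomposition displays the set `Ψ` of ends of `G` (given as a predicate on
rays, closed under equivalence): the canonical map sends ends not in `Ψ` to nodes of the
tree, and restricts to a bijection between `Ψ` and the set of ends of the tree. -/
def Displays (Ψ : (ℕ → V) → Prop) : Prop :=
  (∀ r, IsRay G r → ¬ Ψ r → ∃ t, D.LivesAt r t) ∧
  (∀ r, IsRay G r → Ψ r → ∃ R, IsTreeRay D.tree R ∧ D.CorrespondsTo r R) ∧
  (∀ r s R R', IsRay G r → IsRay G s → Ψ r → Ψ s →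
    IsTreeRay D.tree R → IsTreeRay D.tree R' →
    D.CorrespondsTo r R → D.CorrespondsTo s R' →
    (EquivRays G r s ↔ ShareTail R R')) ∧
  (∀ R, IsTreeRay D.tree R → ∃ r, IsRay G r ∧ Ψ r ∧ D.CorrespondsTo r R)

end TreeDecomp

/-- A rooted tree-decomposition. -/
structure RootedTreeDecomp (G : SimpleGraph V) (ι : Type u) extends TreeDecomp G ι where
  root : ι

namespace RootedTreeDecomp

variable {G : SimpleGraph V} (D : RootedTreeDecomp G ι)

/-- The separators are upwards disjoint: for every two distinct edges `e < f` pointing away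
from the root, the associated separators are disjoint. -/
def UpwardsDisjointSeps : Prop :=
  ∀ i j k l, PointsAway D.tree D.root i j → PointsAway D.tree D.root k l →
    (i, j) ≠ (k, l) → treeLE D.tree D.root j k →
    Disjoint (D.sep i j) (D.sep k l)

/-- The separators are essentially disjoint: some set `F` of edges of the decomposition tree
meets every ray of the tree infinitely often and the separators associated with the edges in
`F` are upwards disjoint. -/
def EssentiallyDisjointSeps : Prop :=
  ∃ F : Set (ι × ι),
    (∀ e ∈ F, PointsAway D.tree D.root e.1 e.2) ∧
    (∀ R, IsTreeRay D.tree R →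
      {n | (R n, R (n + 1)) ∈ F ∨ (R (n + 1), R n) ∈ F}.Infinite) ∧
    (∀ e f, e ∈ F → f ∈ F → e ≠ f → treeLE D.tree D.root e.2 f.1 →
      Disjoint (D.sep e.1 e.2) (D.sep f.1 f.2))

/-- The tree-decomposition covers `W` cofinally: every vertex of `W` lies in some part, and
the set of nodes whose parts meet `W` is cofinal in the tree-order. -/
def CoversCofinally (W : Set V) : Prop :=
  (∀ w ∈ W, ∃ t, w ∈ D.part t) ∧
  ∀ t, ∃ s, treeLE D.tree D.root t s ∧ (D.part s ∩ W).Nonempty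

end RootedTreeDecomp

/-! ### `S_ℵ₀`-trees -/

/-- A (rooted) `S_ℵ₀`-tree over `G`: a tree together with a map from oriented edges to
separations of `G` of finite order, commuting with reversal and order-preserving.  The
oriented edge `(i, j)` is mapped to the separation `(B j i, B i j)`, where `B i j` is the
side towards `j`. -/
structure SepTree (G : SimpleGraph V) (ι : Type u) where
  tree : SimpleGraph ι
  isTree : tree.IsTree
  root : ι
  B : ι → ι → Set V
  union_eq : ∀ i j, tree.Adj i j → B i j ∪ B j i = Set.univ
  isSep : ∀ i j, tree.Adj i j → ∀ u v, G.Adj u v →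
    u ∈ B i j \ B j i → v ∉ B j i \ B i j
  finOrder : ∀ i j, tree.Adj i j → (B i j ∩ B j i).Finite
  mono : ∀ i j k l, tree.Adj i j → tree.Adj k l → OEdgeLE tree i j k l → B k l ⊆ B i j

namespace SepTree

variable {G : SimpleGraph V} (S : SepTree G ι)

/-- The separator of the edge `ij`. -/
def sep (i j : ι) : Set V := S.B i j ∩ S.B j i

/-- Upwards disjoint separators. -/
def UpwardsDisjointSeps : Prop :=
  ∀ i j k l, PointsAway S.tree S.root i j → PointsAway S.tree S.root k l →
    (i, j) ≠ (k, l) → treeLE S.tree S.root j k → Disjoint (S.sep i j) (S.sep k l)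

/-- Upwards connected: for every edge pointing away from the root, the big side induces a
connected subgraph. -/
def UpwardsConnected : Prop :=
  ∀ i j, PointsAway S.tree S.root i j → (G.induce (S.B i j)).Connected

/-- The end represented by the ray `r` corresponds to the end of the tree represented by the
tree-ray `R`: for every oriented edge of the ray pointing away from the root, with associated
separation `(A, B)`, the end lives in `G[B \ A]`. -/
def CorrespondsTo (r : ℕ → V) (R : ℕ → ι) : Prop :=
  ∀ n, PointsAway S.tree S.root (R n) (R (n + 1)) →
    EventuallyIn r (S.B (R n) (R (n + 1)) \ S.B (R (n + 1)) (R n))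

/-- The end represented by `r` lives at the node `t`. -/
def LivesAt (r : ℕ → V) (t : ι) : Prop :=
  ∀ i j, S.tree.Adj i j → SameSide S.tree i j t →
    EventuallyIn r (S.B i j \ S.B j i)

/-- The `S_ℵ₀`-tree displays the set `Ψ` of ends of `G`. -/
def Displays (Ψ : (ℕ → V) → Prop) : Prop :=
  (∀ r, IsRay G r → ¬ Ψ r → ∃ t, S.LivesAt r t) ∧
  (∀ r, IsRay G r → Ψ r → ∃ R, IsTreeRay S.tree R ∧ S.CorrespondsTo r R) ∧
  (∀ r s R R', IsRay G r → IsRay G s → Ψ r → Ψ s →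
    IsTreeRay S.tree R → IsTreeRay S.tree R' →
    S.CorrespondsTo r R → S.CorrespondsTo s R' →
    (EquivRays G r s ↔ ShareTail R R')) ∧
  (∀ R, IsTreeRay S.tree R → ∃ r, IsRay G r ∧ Ψ r ∧ S.CorrespondsTo r R)

end SepTree

/-!
In a normal tree `T`, the vertices strictly below a node `x` separate the up-closure of `x` from
the rest of `T`: a walk in `G` that starts above `x`, ends in `T` and avoids them ends above `x`,
because consecutive vertices of `T` on it are joined by `T`-paths and are therefore comparable.

Given a comb attached to `V(T)`, climb from the root, always moving to a child lying below
infinitely many teeth. Such a child exists: take a tooth above `x` whose path to a tail of the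
spine avoids the finite down-closure of `x`, and the child `y` of `x` below it; by separation,
all but finitely many teeth lie above `y` as well. The normal ray obtained is equivalent to the
spine: for finite `X`, a late vertex of the ray has no element of `X` above it and reaches a
tooth, hence the spine, inside its up-closure.

Two normal rays that agree up to a node `t` and then branch are separated by the finite
down-closure of `t`, since a walk joining their tails outside it would make the two children of
`t` comparable.
-/

open Filter

section Rays

variable {G : SimpleGraph V}

lemma exists_forall_ge_notMem_of_injective {r : ℕ → V} (hr : Function.Injective r) {X : Set V}
    (hX : X.Finite) : ∃ N, ∀ k, N ≤ k → r k ∉ X := by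
  rw [← eventually_atTop, ← Nat.cofinite_eq_atTop]
  exact hr.tendsto_cofinite.eventually hX.eventually_cofinite_notMem

lemma exists_walk_of_forall_ge_notMem {r : ℕ → V} (hr : ∀ n, G.Adj (r n) (r (n + 1)))
    {X : Set V} {N : ℕ} (hX : ∀ k, N ≤ k → r k ∉ X) {a b : ℕ} (ha : N ≤ a) (hb : N ≤ b) :
    ∃ p : G.Walk (r a) (r b), ∀ w ∈ p.support, w ∉ X := by
  wlog hab : a ≤ b generalizing a b
  · obtain ⟨p, hp⟩ := this hb ha (le_of_not_ge hab)
    exact ⟨p.reverse, by simpa using hp⟩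
  induction b, hab using Nat.le_induction with
  | base => exact ⟨.nil, by simpa using hX a ha⟩
  | succ b hab ih =>
    obtain ⟨p, hp⟩ := ih (ha.trans hab)
    refine ⟨p.concat (hr b), fun w hw => ?_⟩
    rw [Walk.support_concat, List.mem_append, List.mem_singleton] at hw
    rcases hw with hw | rfl
    · exact hp w hw
    · exact hX _ (by omega)

lemma EquivRays.symm {r s : ℕ → V} (h : EquivRays G r s) : EquivRays G s r := fun X hX => by
  obtain ⟨m, n, p, hp, hm, hn⟩ := h X hX
  exact ⟨n, m, p.reverse, by simpa using hp, hn, hm⟩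

lemma equivRays_refl {r : ℕ → V} (hr : Function.Injective r) : EquivRays G r r := fun X hX => by
  obtain ⟨N, hN⟩ := exists_forall_ge_notMem_of_injective hr hX
  exact ⟨N, N, .nil, by simpa using hN N le_rfl, hN, hN⟩

lemma EquivRays.trans {r s t : ℕ → V} (h₁ : EquivRays G r s) (h₂ : EquivRays G s t)
    (hs : ∀ n, G.Adj (s n) (s (n + 1))) : EquivRays G r t := fun X hX => by
  obtain ⟨m, n, p, hp, hm, hn⟩ := h₁ X hX
  obtain ⟨n', k, q, hq, hn', hk⟩ := h₂ X hX
  have hst : ∀ j, min n n' ≤ j → s j ∉ X := fun j hj => by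
    rcases le_total n n' with h | h
    · exact hn j (by omega)
    · exact hn' j (by omega)
  obtain ⟨pq, hpq⟩ := exists_walk_of_forall_ge_notMem hs hst (min_le_left n n')
    (min_le_right n n')
  refine ⟨m, k, p.append (pq.append q), fun w hw => ?_, hm, hk⟩
  simp only [Walk.mem_support_append_iff] at hw
  rcases hw with hw | hw | hw
  exacts [hp w hw, hpq w hw, hq w hw]

end Rays

namespace Comb

variable {G : SimpleGraph V} {U : Set V} (c : Comb G U)

lemma tooth_injective : Function.Injective c.tooth := fun m n h => by
  by_contra hmn
  exact c.paths_disjoint m n hmn _ (c.path m).end_mem_support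
    (by rw [h]; exact (c.path n).end_mem_support)

lemma start_injective : Function.Injective c.start := fun m n h => by
  by_contra hmn
  exact c.paths_disjoint m n hmn _ (c.path m).start_mem_support
    (by rw [h]; exact (c.path n).start_mem_support)

def Avoids (X : Set V) (n : ℕ) : Prop :=
  (∀ w ∈ (c.path n).support, w ∉ X) ∧ ∀ k, c.start n ≤ k → c.spine k ∉ X

variable {c}

lemma Avoids.mono {X Y : Set V} {n : ℕ} (h : c.Avoids Y n) (hXY : X ⊆ Y) : c.Avoids X n :=
  ⟨fun w hw hX => h.1 w hw (hXY hX), fun k hk hX => h.2 k hk (hXY hX)⟩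

lemma eventually_avoids {X : Set V} (hX : X.Finite) : ∀ᶠ n in cofinite, c.Avoids X n := by
  refine Eventually.and ?_ ?_
  · have h : ∀ᶠ n in cofinite, ∀ w ∈ X, w ∉ (c.path n).support :=
      (eventually_all_finite hX).2 fun w _ => Set.Finite.eventually_cofinite_notMem <|
        Set.Subsingleton.finite fun m hm n hn =>
          by_contra fun hmn => c.paths_disjoint m n hmn w hm hn
    exact h.mono fun n hn w hw hwX => hn w hwX hw
  · obtain ⟨N, hN⟩ := exists_forall_ge_notMem_of_injective c.spine_ray.1 hX
    have hstart : ∀ᶠ n in cofinite, N ≤ c.start n := by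
      refine c.start_injective.tendsto_cofinite.eventually ?_
      rw [Nat.cofinite_eq_atTop]
      exact eventually_ge_atTop N
    exact hstart.mono fun n hn k hk => hN k (hn.trans hk)

lemma exists_walk_of_avoids {X : Set V} {m n : ℕ} (hm : c.Avoids X m) (hn : c.Avoids X n) :
    ∃ p : G.Walk (c.tooth m) (c.tooth n), ∀ w ∈ p.support, w ∉ X := by
  obtain ⟨p, hp⟩ := exists_walk_of_forall_ge_notMem c.spine_ray.2
    (N := min (c.start m) (c.start n)) (fun k hk => by
      rcases le_total (c.start m) (c.start n) with h | h
      · exact hm.2 k (by omega)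
      · exact hn.2 k (by omega)) (min_le_left _ _) (min_le_right _ _)
  refine ⟨(c.path m).reverse.append (p.append (c.path n)), fun w hw => ?_⟩
  simp only [Walk.mem_support_append_iff, Walk.support_reverse, List.mem_reverse] at hw
  rcases hw with hw | hw | hw
  exacts [hm.1 w hw, hp w hw, hn.1 w hw]

end Comb

lemma inClosure_of_forall_mem {G : SimpleGraph V} {U : Set V} {r : ℕ → V} (hr : IsRay G r)
    (hU : ∀ n, r n ∈ U) : InClosure G U r := by
  refine ⟨⟨r, hr, id, r, hU, fun _ => .nil, fun _ => .nil, fun n w hw _ => ?_,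
    fun m n hmn w hm hn => ?_⟩, equivRays_refl hr.1⟩
  · simpa using hw
  · simp only [Walk.support_nil, List.mem_singleton] at hm hn
    exact hmn (hr.1 (hm.symm.trans hn))

namespace RootedTree

variable {G : SimpleGraph V} (T : RootedTree G)

noncomputable def pathTo {y : V} (hy : y ∈ T.sub.verts) :
    T.sub.coe.Walk ⟨T.root, T.root_mem⟩ ⟨y, hy⟩ :=
  (T.isTree.existsUnique_path _ _).exists.choose

lemma isPath_pathTo {y : V} (hy : y ∈ T.sub.verts) : (T.pathTo hy).IsPath :=
  (T.isTree.existsUnique_path _ _).exists.choose_spec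

lemma eq_pathTo {y : V} {hy : y ∈ T.sub.verts}
    {p : T.sub.coe.Walk ⟨T.root, T.root_mem⟩ ⟨y, hy⟩} (hp : p.IsPath) : p = T.pathTo hy :=
  (T.isTree.existsUnique_path _ _).unique hp (T.isPath_pathTo hy)

variable {T} {x y z : V}

lemma tle.mem_left (h : T.tle x y) : x ∈ T.sub.verts := h.fst

lemma tle.mem_right (h : T.tle x y) : y ∈ T.sub.verts := h.snd.fst

lemma tle_iff_mem_support (hx : x ∈ T.sub.verts) (hy : y ∈ T.sub.verts) :
    T.tle x y ↔ ⟨x, hx⟩ ∈ (T.pathTo hy).support :=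
  ⟨fun ⟨_, _, h⟩ => h _ (T.isPath_pathTo hy), fun h => ⟨hx, hy, fun _ hp => T.eq_pathTo hp ▸ h⟩⟩

lemma tle_refl (hx : x ∈ T.sub.verts) : T.tle x x :=
  ⟨hx, hx, fun p _ => p.end_mem_support⟩

lemma tle_root (hy : y ∈ T.sub.verts) : T.tle T.root y :=
  ⟨T.root_mem, hy, fun p _ => p.start_mem_support⟩

open Classical in
lemma takeUntil_pathTo {hx : x ∈ T.sub.verts} {hy : y ∈ T.sub.verts}
    (h : ⟨x, hx⟩ ∈ (T.pathTo hy).support) : (T.pathTo hy).takeUntil _ h = T.pathTo hx :=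
  T.eq_pathTo ((T.isPath_pathTo hy).takeUntil h)

lemma tle_trans (hxy : T.tle x y) (hyz : T.tle y z) : T.tle x z := by
  classical
  have hy := (tle_iff_mem_support hxy.mem_right hyz.mem_right).1 hyz
  rw [tle_iff_mem_support hxy.mem_left hyz.mem_right]
  refine Walk.support_takeUntil_subset_support _ hy ?_
  rw [takeUntil_pathTo]
  exact (tle_iff_mem_support _ _).1 hxy

lemma tle_antisymm (hxy : T.tle x y) (hyx : T.tle y x) : x = y := by
  classical
  by_contra hne
  have h₁ := Walk.length_takeUntil_lt_length
    ((tle_iff_mem_support hxy.mem_left hxy.mem_right).1 hxy) fun h => hne congr($h.1)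
  have h₂ := Walk.length_takeUntil_lt_length
    ((tle_iff_mem_support hyx.mem_left hyx.mem_right).1 hyx) fun h => hne congr($h.1).symm
  rw [takeUntil_pathTo] at h₁ h₂
  omega

lemma tle_total_of_tle (hxz : T.tle x z) (hyz : T.tle y z) : T.tle x y ∨ T.tle y x := by
  classical
  have hz := hxz.mem_right
  have hpx := (T.pathTo hz).support_takeUntil_prefix_support
    ((tle_iff_mem_support hxz.mem_left hz).1 hxz)
  have hpy := (T.pathTo hz).support_takeUntil_prefix_support
    ((tle_iff_mem_support hyz.mem_left hz).1 hyz)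
  rw [takeUntil_pathTo] at hpx hpy
  rw [tle_iff_mem_support hxz.mem_left hyz.mem_left, tle_iff_mem_support hyz.mem_left hxz.mem_left]
  rcases List.prefix_or_prefix_of_prefix hpx hpy with h | h
  · exact .inl (h.subset (Walk.end_mem_support _))
  · exact .inr (h.subset (Walk.end_mem_support _))

variable (T) in
lemma finite_setOf_tle (y : V) : {x | T.tle x y}.Finite := by
  by_cases hy : y ∈ T.sub.verts
  · refine ((T.pathTo hy).support.finite_toSet.image Subtype.val).subset fun x hx => ?_
    exact ⟨_, (tle_iff_mem_support hx.mem_left hy).1 hx, rfl⟩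
  · exact Set.finite_empty.subset fun x hx => hy hx.mem_right

lemma pathTo_eq_concat (hxy : T.sub.Adj x y)
    (hy : ⟨y, hxy.snd_mem⟩ ∉ (T.pathTo hxy.fst_mem).support) :
    T.pathTo hxy.snd_mem =
      (T.pathTo hxy.fst_mem).concat (show T.sub.coe.Adj ⟨x, _⟩ ⟨y, _⟩ from hxy) :=
  (T.eq_pathTo ((T.isPath_pathTo _).concat hy _)).symm

lemma tle_or_tle_of_adj (hxy : T.sub.Adj x y) : T.tle x y ∨ T.tle y x := by
  by_cases hyx : T.tle y x
  · exact .inr hyx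
  · rw [tle_iff_mem_support hxy.snd_mem hxy.fst_mem] at hyx
    rw [tle_iff_mem_support hxy.fst_mem hxy.snd_mem, pathTo_eq_concat hxy hyx, Walk.support_concat]
    exact .inl (List.mem_append_left _ (Walk.end_mem_support _))

lemma tle_of_tle_of_adj (hxy : T.sub.Adj x y) (hle : T.tle x y) (hzy : T.tle z y) (hne : z ≠ y) :
    T.tle z x := by
  have hz := hzy.mem_left
  have hy : ⟨y, hxy.snd_mem⟩ ∉ (T.pathTo hxy.fst_mem).support := fun h =>
    hxy.ne (tle_antisymm hle ((tle_iff_mem_support _ _).2 h))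
  rw [tle_iff_mem_support hz hxy.snd_mem, pathTo_eq_concat hxy hy, Walk.support_concat,
    List.mem_append, List.mem_singleton] at hzy
  rw [tle_iff_mem_support hz hxy.fst_mem]
  exact hzy.resolve_right fun h => hne congr($h.1)

open Classical in
lemma tle_of_mem_support_dropUntil {hx : x ∈ T.sub.verts} {hy : y ∈ T.sub.verts}
    (h : ⟨x, hx⟩ ∈ (T.pathTo hy).support) {z : T.sub.verts}
    (hz : z ∈ ((T.pathTo hy).dropUntil _ h).support) : T.tle x z := by
  set q := (T.pathTo hy).dropUntil _ h
  have hp : ((T.pathTo hy).takeUntil _ h |>.append (q.takeUntil z hz)).IsPath := by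
    refine Walk.IsPath.of_append_left (q := q.dropUntil z hz) ?_
    rw [← Walk.append_assoc, Walk.take_spec, Walk.take_spec]
    exact T.isPath_pathTo hy
  rw [tle_iff_mem_support hx z.2, ← T.eq_pathTo hp, Walk.mem_support_append_iff]
  exact .inl (Walk.end_mem_support _)

lemma exists_walk_of_tle (h : T.tle x y) :
    ∃ q : T.sub.coe.Walk ⟨x, h.mem_left⟩ ⟨y, h.mem_right⟩,
      ∀ z ∈ q.support, T.tle x z ∧ T.tle z y := by
  classical
  have hx := (tle_iff_mem_support h.mem_left h.mem_right).1 h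
  refine ⟨(T.pathTo _).dropUntil _ hx, fun z hz => ⟨tle_of_mem_support_dropUntil hx hz, ?_⟩⟩
  exact (tle_iff_mem_support z.2 h.mem_right).2 (Walk.support_dropUntil_subset_support _ _ hz)

lemma exists_adj_of_tle (h : T.tle x y) (hne : x ≠ y) :
    ∃ z, T.sub.Adj x z ∧ T.tle x z ∧ T.tle z y := by
  obtain ⟨q, hq⟩ := exists_walk_of_tle h
  have hq' : ¬ q.Nil := fun hnil => hne congr($hnil.eq.1)
  exact ⟨q.snd, q.adj_snd hq', hq _ (q.getVert_mem_support 1)⟩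

lemma tle_of_le_of_tle_succ {s : ℕ → V} (hs : ∀ n, T.tle (s n) (s (n + 1))) {i j : ℕ}
    (hij : i ≤ j) : T.tle (s i) (s j) := by
  induction j, hij using Nat.le_induction with
  | base => exact tle_refl (hs i).mem_left
  | succ j _ ih => exact tle_trans ih (hs j)

namespace IsNormalRay

variable {s : ℕ → V} (hs : T.IsNormalRay s)
include hs

lemma isRay : IsRay G s := ⟨hs.1.1, fun n => (hs.1.2 n).adj_sub⟩

lemma tle_succ_of_forall_tle_eq {n : ℕ} (h : ∀ x, T.tle x (s n) → ∃ j ≤ n, s j = x) :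
    T.tle (s n) (s (n + 1)) :=
  (tle_or_tle_of_adj (hs.1.2 n)).resolve_right fun hle => by
    obtain ⟨j, hj, hsj⟩ := h _ hle
    have := hs.1.1 hsj
    omega

lemma exists_eq_of_tle (n : ℕ) : ∀ x, T.tle x (s n) → ∃ j ≤ n, s j = x := by
  induction n with
  | zero =>
    intro x hx
    rw [hs.2] at hx
    exact ⟨0, le_rfl, hs.2.trans (tle_antisymm hx (tle_root hx.mem_left)).symm⟩
  | succ n ih =>
    intro x hx
    by_cases hxn : x = s (n + 1)
    · exact ⟨n + 1, le_rfl, hxn.symm⟩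
    · obtain ⟨j, hj, hsj⟩ := ih x <|
        tle_of_tle_of_adj (hs.1.2 n) (hs.tle_succ_of_forall_tle_eq ih) hx hxn
      exact ⟨j, by omega, hsj⟩

lemma tle_succ (n : ℕ) : T.tle (s n) (s (n + 1)) :=
  hs.tle_succ_of_forall_tle_eq (hs.exists_eq_of_tle n)

lemma tle_of_le {i j : ℕ} (hij : i ≤ j) : T.tle (s i) (s j) :=
  tle_of_le_of_tle_succ hs.tle_succ hij

lemma mem_verts (n : ℕ) : s n ∈ T.sub.verts := (hs.tle_succ n).mem_left

end IsNormalRay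

lemma exists_normalRay_of_forall_exists_adj {P : V → Prop} (hroot : P T.root)
    (hstep : ∀ x, P x → ∃ y, T.sub.Adj x y ∧ T.tle x y ∧ P y) :
    ∃ s, T.IsNormalRay s ∧ ∀ n, P (s n) := by
  choose! f hadj htle hP using hstep
  set s : ℕ → V := fun n => f^[n] T.root
  have hsucc (n : ℕ) : s (n + 1) = f (s n) := Function.iterate_succ_apply' f n T.root
  have hsP (n : ℕ) : P (s n) := by
    induction n with
    | zero => exact hroot
    | succ n ih => rw [hsucc]; exact hP _ ih
  have hadj' (n : ℕ) : T.sub.Adj (s n) (s (n + 1)) := hsucc n ▸ hadj _ (hsP n)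
  have htle' (n : ℕ) : T.tle (s n) (s (n + 1)) := hsucc n ▸ htle _ (hsP n)
  have hinj : Function.Injective s := by
    intro i j hij
    by_contra hne
    wlog hlt : i < j generalizing i j
    · exact this hij.symm (Ne.symm hne) (by omega)
    have hle : T.tle (s (i + 1)) (s i) := hij ▸ tle_of_le_of_tle_succ htle' hlt
    exact (hadj' i).ne (tle_antisymm (htle' i) hle)
  exact ⟨s, ⟨⟨hinj, hadj'⟩, rfl⟩, hsP⟩

lemma IsNormalRay.equivRays_spine_of_frequently_tle_tooth {U : Set V} (c : Comb G U)
    {s : ℕ → V} (hs : T.IsNormalRay s)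
    (hsc : ∀ n, ∃ᶠ k in cofinite, T.tle (s n) (c.tooth k)) : EquivRays G s c.spine := by
  intro X hX
  have hY : (⋃ x ∈ X, {w | T.tle w x}).Finite := hX.biUnion fun x _ => T.finite_setOf_tle x
  obtain ⟨M, hM⟩ := exists_forall_ge_notMem_of_injective hs.1.1 hY
  have hup (w : V) (hw : T.tle (s M) w) : w ∉ X := fun hwX =>
    hM M le_rfl (Set.mem_biUnion hwX hw)
  obtain ⟨k, hk, hkX⟩ := ((hsc M).and_eventually (c.eventually_avoids hX)).exists
  obtain ⟨q, hq⟩ := exists_walk_of_tle hk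
  have hq' : ∀ w ∈ (q.map T.sub.hom).support, T.tle (s M) w := by
    simp only [Walk.support_map, List.mem_map]
    rintro _ ⟨z, hz, rfl⟩
    exact (hq z hz).1
  refine ⟨M, c.start k, (q.map T.sub.hom).append (c.path k).reverse, fun w hw => ?_,
    fun j hj => hup _ (hs.tle_of_le hj), hkX.2⟩
  rcases (Walk.mem_support_append_iff _ _).1 hw with hw | hw
  · exact hup w (hq' w hw)
  · exact hkX.1 w (by simpa using hw)

namespace IsNormal

variable (hT : T.IsNormal)
include hT

lemma tle_or_tle_of_walk {a b : V} (ha : a ∈ T.sub.verts) (hb : b ∈ T.sub.verts)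
    (p : G.Walk a b) (hp : ∀ w ∈ p.support, w ≠ a → w ≠ b → w ∉ T.sub.verts) :
    T.tle a b ∨ T.tle b a := by
  classical
  by_cases hab : a = b
  · exact .inl (hab ▸ tle_refl ha)
  · refine hT p.bypass p.bypass_isPath ?_ ha hb fun w hw =>
      hp w (p.support_bypass_subset_support hw)
    exact Nat.pos_of_ne_zero fun h => hab (p.bypass.eq_of_length_eq_zero h)

lemma tle_of_walk_of_interior_notMem {x a b : V} (hxa : T.tle x a) (hb : b ∈ T.sub.verts)
    (p : G.Walk a b)
    (hp : ∀ w ∈ p.support, w ≠ a → w ≠ b → w ∉ T.sub.verts) (hbx : T.tle b x → b = x) :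
    T.tle x b := by
  rcases hT.tle_or_tle_of_walk hxa.mem_right hb p hp with hab | hba
  · exact tle_trans hxa hab
  · rcases tle_total_of_tle hxa hba with hxb | hbx'
    · exact hxb
    · rw [hbx hbx']
      exact tle_refl hxa.mem_left

lemma tle_of_walk {x a b : V} (hxa : T.tle x a) (hb : b ∈ T.sub.verts) (p : G.Walk a b)
    (hp : ∀ w ∈ p.support, T.tle w x → w = x) : T.tle x b := by
  suffices H : ∀ {v : V} (p : G.Walk v b), (∀ w ∈ p.support, T.tle w x → w = x) →
      ∀ {a : V}, T.tle x a → ∀ q : G.Walk a v, (∀ w ∈ q.support, w ≠ a → w ∉ T.sub.verts) →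
      T.tle x b from H p hp hxa .nil (by simp)
  clear hxa p hp
  -- `q` runs from the last vertex `a` of `T` seen so far to the current vertex `v`.
  intro v p
  induction p with
  | nil =>
    intro hp a hxa q hq
    exact hT.tle_of_walk_of_interior_notMem hxa hb q (fun w hw hwa _ => hq w hw hwa)
      (hp _ (by simp))
  | @cons v v' b h p ih =>
    intro hp a hxa q hq
    have hq' : ∀ w ∈ (q.concat h).support, w ≠ a → w ≠ v' → w ∉ T.sub.verts := by
      intro w hw hwa hwv
      rw [Walk.support_concat, List.mem_append, List.mem_singleton] at hw
      exact hw.elim (hq w · hwa) (absurd · hwv)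
    by_cases hv' : v' ∈ T.sub.verts
    · refine ih hb (fun w hw => hp w (List.mem_cons_of_mem _ hw))
        (hT.tle_of_walk_of_interior_notMem hxa hv' _ hq' (hp v' (by simp))) .nil (by simp)
    · refine ih hb (fun w hw => hp w (List.mem_cons_of_mem _ hw)) hxa (q.concat h)
        fun w hw hwa => ?_
      by_cases hwv : w = v'
      · exact hwv ▸ hv'
      · exact hq' w hw hwa hwv

lemma tle_tooth_of_avoids (c : Comb G T.sub.verts) {x : V} {m n : ℕ}
    (hm : c.Avoids {w | T.tle w x ∧ w ≠ x} m) (hn : c.Avoids {w | T.tle w x ∧ w ≠ x} n)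
    (hxm : T.tle x (c.tooth m)) : T.tle x (c.tooth n) := by
  obtain ⟨p, hp⟩ := Comb.exists_walk_of_avoids hm hn
  exact hT.tle_of_walk hxm (c.tooth_mem n) p fun w hw hwx =>
    by_contra fun hne => hp w hw ⟨hwx, hne⟩

lemma exists_adj_frequently_tle_tooth (c : Comb G T.sub.verts) {x : V}
    (hx : ∃ᶠ n in cofinite, T.tle x (c.tooth n)) :
    ∃ y, T.sub.Adj x y ∧ T.tle x y ∧ ∃ᶠ n in cofinite, T.tle y (c.tooth n) := by
  have hX := T.finite_setOf_tle x
  have hne : ∀ᶠ n in cofinite, c.tooth n ≠ x :=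
    c.tooth_injective.tendsto_cofinite.eventually (eventually_cofinite_ne x)
  obtain ⟨m, ⟨hxm, hmx⟩, hm⟩ :=
    ((hx.and_eventually hne).and_eventually (c.eventually_avoids hX)).exists
  obtain ⟨y, hxy, hle, hym⟩ := exists_adj_of_tle hxm hmx.symm
  have hsub : {w | T.tle w y ∧ w ≠ y} ⊆ {w | T.tle w x} := fun w hw =>
    tle_of_tle_of_adj hxy hle hw.1 hw.2
  refine ⟨y, hxy, hle, Eventually.frequently ?_⟩
  exact (c.eventually_avoids (hX.subset hsub)).mono fun n hn =>
    hT.tle_tooth_of_avoids c (hm.mono hsub) hn hym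

lemma exists_normalRay_equivRays (c : Comb G T.sub.verts) :
    ∃ s, T.IsNormalRay s ∧ EquivRays G s c.spine := by
  obtain ⟨s, hs, hsc⟩ := exists_normalRay_of_forall_exists_adj
    (P := fun x => ∃ᶠ n in cofinite, T.tle x (c.tooth n))
    (Eventually.of_forall fun n => tle_root (c.tooth_mem n)).frequently
    fun x hx => hT.exists_adj_frequently_tle_tooth c hx
  exact ⟨s, hs, hs.equivRays_spine_of_frequently_tle_tooth c hsc⟩

lemma eq_of_equivRays {s s' : ℕ → V} (hs : T.IsNormalRay s) (hs' : T.IsNormalRay s')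
    (h : EquivRays G s s') : s = s' := by
  funext k
  induction k with
  | zero => exact hs.2.trans hs'.2.symm
  | succ k ih =>
    obtain ⟨m, n, p, hp, hm, hn⟩ := h _ (T.finite_setOf_tle (s k))
    have hkm : k + 1 ≤ m := by
      by_contra! hmk
      exact hm m le_rfl (hs.tle_of_le (by omega))
    have hkn : k + 1 ≤ n := by
      by_contra! hnk
      exact hn n le_rfl (ih ▸ hs'.tle_of_le (by omega))
    have hadj' : T.sub.Adj (s k) (s' (k + 1)) := ih ▸ hs'.1.2 k
    have hle' : T.tle (s k) (s' (k + 1)) := ih ▸ hs'.tle_succ k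
    have hsn : T.tle (s (k + 1)) (s' n) := hT.tle_of_walk (hs.tle_of_le hkm) (hs'.mem_verts n) p
      fun w hw hws => by_contra fun hne =>
        hp w hw (tle_of_tle_of_adj (hs.1.2 k) (hs.tle_succ k) hws hne)
    rcases tle_total_of_tle hsn (hs'.tle_of_le hkn) with hle | hle
    · by_contra hne
      exact (hs.1.2 k).ne (tle_antisymm (hs.tle_succ k) (tle_of_tle_of_adj hadj' hle' hle hne))
    · by_contra hne
      exact hadj'.ne (tle_antisymm hle' (tle_of_tle_of_adj (hs.1.2 k) (hs.tle_succ k) hle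
        (Ne.symm hne)))

end IsNormal

end RootedTree

/-- If `T ⊆ G` is a normal tree, then every end of `G` in the closure of `V(T)` contains
exactly one normal ray of `T`; moreover, sending these ends to the normal rays they contain
defines a bijection between `∂_Ω T` and the normal rays of `T` (Lemma 2.6). -/
theorem end_in_closure_unique_normalRay {V : Type u} (G : SimpleGraph V)
    (T : RootedTree G) (hT : T.IsNormal) :
    (∀ r, IsRay G r → InClosure G T.sub.verts r →
        ∃! s : ℕ → V, T.IsNormalRay s ∧ EquivRays G s r) ∧
      (∀ s, T.IsNormalRay s → InClosure G T.sub.verts s) ∧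
      (∀ r r' s, IsRay G r → IsRay G r' → InClosure G T.sub.verts r →
        InClosure G T.sub.verts r' → T.IsNormalRay s →
        EquivRays G s r → EquivRays G s r' → EquivRays G r r') := by
  refine ⟨fun r hr ⟨c, hcr⟩ => ?_, fun s hs => inClosure_of_forall_mem hs.isRay hs.mem_verts,
    fun r r' s _ _ _ _ hs h h' => h.symm.trans h' hs.isRay.2⟩
  obtain ⟨s, hs, hsc⟩ := hT.exists_normalRay_equivRays c
  have hsr : EquivRays G s r := hsc.trans hcr c.spine_ray.2
  exact ⟨s, ⟨hs, hsr⟩, fun s' ⟨hs', hs'r⟩ =>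
    hT.eq_of_equivRays hs' hs (hs'r.trans hsr.symm hr.2)⟩
end StarsCombs
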